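/- arXiv:1006.3103 — 2 statements merged into one kernel-verified Lean document; each statement's English description precedes it below -/
import Mathlib

section
/- For every Schwartz function Ψ ∈ S(ℝ^d), every j ∈ {1,…,d} and all k, y ∈ ℝ^d, the Bloch–Floquet–Zak transform intertwines momentum as follows: (Z(−i ∂_{x_j} Ψ))(k,y) = −i ∂_{y_j} (ZΨ)(k,y) + k_j (ZΨ)(k,y). -/
/-!
Write `φ(x) = e^{-ik·x} Ψ(x)`, so that `(ZΨ)(k, ·)` is the lattice periodization `∑_γ φ(· + γ)`.
Both `φ` and `∇φ` are `O((1 + |x|)^{-(d+1)})`, and `∑_γ (1 + |x + γ|)^{-(d+1)}` converges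
locally uniformly in `x`, so the periodization may be differentiated term by term. The theorem
is then the Leibniz rule `e^{-ik·x} (-i∂_jΨ)(x) = -i∂_jφ(x) + k_j φ(x)`, summed over the lattice.
-/

open scoped BigOperators RealInnerProductSpace

noncomputable section

abbrev Ed (d : ℕ) := EuclideanSpace ℝ (Fin d)

/-- The lattice vector with integer coefficients `m` with respect to the basis `e`. -/
noncomputable def latVec {d : ℕ} (e : Fin d → Ed d) (m : Fin d → ℤ) : Ed d :=
  ∑ j, (m j : ℝ) • e j

/-- The Bloch–Floquet–Zak transform `(ZΨ)(k,y) = ∑_{γ ∈ Γ} e^{-ik·(y+γ)} Ψ(y+γ)`. -/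
noncomputable def zak {d : ℕ} (e : Fin d → Ed d) (Ψ : SchwartzMap (Ed d) ℂ)
    (k y : Ed d) : ℂ :=
  ∑' m : Fin d → ℤ,
    Complex.exp (-Complex.I * ((⟪k, y + latVec e m⟫ : ℝ) : ℂ)) * Ψ (y + latVec e m)

open Complex Asymptotics

theorem Module.Basis.summable_inv_one_add_norm_intSum_pow {E ι : Type*} [NormedAddCommGroup E]
    [NormedSpace ℝ E] [Fintype ι] (b : Module.Basis ι ℝ E) {n : ℕ} (hn : Fintype.card ι < n) :
    Summable fun m : ι → ℤ => ((1 + ‖∑ i, (m i : ℝ) • b i‖) ^ n)⁻¹ := by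
  have := b.finiteDimensional_of_finite
  let B := (b.restrictScalars ℤ).equivFun.symm
  have hΛ := ZLattice.summable_norm_pow_inv (L := Submodule.span ℤ (Set.range b)) n
    (by rwa [Module.finrank_eq_card_basis (b.restrictScalars ℤ)])
  have hB : ∀ m : ι → ℤ, ‖∑ i, (m i : ℝ) • b i‖ = ‖B m‖ := fun m => by
    simp [B, Module.Basis.equivFun_symm_apply, Int.cast_smul_eq_zsmul]
  simp_rw [hB]
  -- `‖B m‖⁻¹ ^ n` is `0` at `m = 0` (as `0⁻¹ = 0`), so the comparison only holds cofinitely.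
  refine Summable.of_norm_bounded_eventually (B.toEquiv.summable_iff.2 hΛ) ?_
  refine (Set.finite_singleton 0).subset fun m hm => ?_
  rw [Set.mem_singleton_iff]
  by_contra h0
  have hpos : 0 < ‖B m‖ := norm_pos_iff.2 (B.map_ne_zero_iff.2 h0)
  apply hm
  rw [Set.mem_ofPred_eq, norm_inv, norm_pow, Real.norm_of_nonneg (by positivity)]
  show ((1 + ‖B m‖) ^ n)⁻¹ ≤ ‖B m‖⁻¹ ^ n
  rw [inv_pow]
  gcongr
  simp

theorem inv_one_add_norm_add_pow_le {E : Type*} [SeminormedAddCommGroup E] (x v : E) (n : ℕ) :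
    ((1 + ‖x + v‖) ^ n)⁻¹ ≤ (1 + ‖x‖) ^ n * ((1 + ‖v‖) ^ n)⁻¹ := by
  have hv : 1 + ‖v‖ ≤ (1 + ‖x‖) * (1 + ‖x + v‖) := by
    have := norm_sub_le (x + v) x
    rw [add_sub_cancel_left] at this
    nlinarith [norm_nonneg x, norm_nonneg (x + v)]
  rw [← div_eq_mul_inv, le_div_iff₀ (by positivity), inv_mul_le_iff₀ (by positivity), ← mul_pow,
    mul_comm]
  exact pow_le_pow_left₀ (by positivity) hv n

section Periodization

variable {E F ι : Type*} [NormedAddCommGroup E] [NormedAddCommGroup F] {n : ℕ} {γ : ι → E}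

theorem Asymptotics.IsBigO.exists_norm_comp_add_le {g : E → F}
    (hg : g =O[⊤] fun z => ((1 + ‖z‖) ^ n)⁻¹) :
    ∃ C, 0 ≤ C ∧ ∀ x v, ‖g (x + v)‖ ≤ C * (1 + ‖x‖) ^ n * ((1 + ‖v‖) ^ n)⁻¹ := by
  obtain ⟨C, hC⟩ := isBigO_top.1 hg
  refine ⟨max C 0, le_max_right _ _, fun x v => ?_⟩
  calc ‖g (x + v)‖ ≤ max C 0 * ((1 + ‖x + v‖) ^ n)⁻¹ := by
        refine (hC _).trans ?_
        rw [Real.norm_of_nonneg (by positivity)]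
        gcongr
        exact le_max_left _ _
    _ ≤ max C 0 * (1 + ‖x‖) ^ n * ((1 + ‖v‖) ^ n)⁻¹ := by
        rw [mul_assoc]
        gcongr
        exact inv_one_add_norm_add_pow_le x v n

variable [CompleteSpace F]

theorem summable_comp_add_of_isBigO {g : E → F} (hg : g =O[⊤] fun z => ((1 + ‖z‖) ^ n)⁻¹)
    (hγ : Summable fun i => ((1 + ‖γ i‖) ^ n)⁻¹) (x : E) :
    Summable fun i => g (x + γ i) := by
  obtain ⟨C, -, hC⟩ := hg.exists_norm_comp_add_le
  exact .of_norm_bounded (hγ.mul_left (C * (1 + ‖x‖) ^ n)) fun i => hC x (γ i)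

theorem hasFDerivAt_tsum_comp_add [NormedSpace ℝ E] [NormedSpace ℝ F] {f : E → F}
    (hf : Differentiable ℝ f) (hf₀ : f =O[⊤] fun z => ((1 + ‖z‖) ^ n)⁻¹)
    (hf₁ : fderiv ℝ f =O[⊤] fun z => ((1 + ‖z‖) ^ n)⁻¹)
    (hγ : Summable fun i => ((1 + ‖γ i‖) ^ n)⁻¹) (y : E) :
    HasFDerivAt (fun x => ∑' i, f (x + γ i)) (∑' i, fderiv ℝ f (y + γ i)) y := by
  obtain ⟨C, hC₀, hC⟩ := hf₁.exists_norm_comp_add_le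
  have hy := Metric.mem_ball_self (x := y) one_pos
  refine hasFDerivAt_tsum_of_isPreconnected (hγ.mul_left (C * (2 + ‖y‖) ^ n))
    Metric.isOpen_ball (convex_ball y 1).isPreconnected
    (fun i x _ => (hasFDerivAt_comp_add_right (γ i)).2 (hf _).hasFDerivAt)
    (fun i x hx => (hC x (γ i)).trans ?_) hy (summable_comp_add_of_isBigO hf₀ hγ y) hy
  have : ‖x‖ ≤ 1 + ‖y‖ := by
    have := norm_le_norm_add_norm_sub' x y
    rw [← dist_eq_norm] at this
    linarith [Metric.mem_ball.1 hx]
  gcongr C * ?_ ^ n * _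
  linarith

theorem fderiv_tsum_comp_add_apply [NormedSpace ℝ E] [NormedSpace ℝ F] {f : E → F}
    (hf : Differentiable ℝ f) (hf₀ : f =O[⊤] fun z => ((1 + ‖z‖) ^ n)⁻¹)
    (hf₁ : fderiv ℝ f =O[⊤] fun z => ((1 + ‖z‖) ^ n)⁻¹)
    (hγ : Summable fun i => ((1 + ‖γ i‖) ^ n)⁻¹) (y v : E) :
    fderiv ℝ (fun x => ∑' i, f (x + γ i)) y v = ∑' i, fderiv ℝ f (y + γ i) v := by
  rw [(hasFDerivAt_tsum_comp_add hf hf₀ hf₁ hγ y).fderiv]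
  exact (ContinuousLinearMap.apply ℝ F v).map_tsum (summable_comp_add_of_isBigO hf₁ hγ y)

end Periodization

section Modulation

variable {E : Type*} [NormedAddCommGroup E] [InnerProductSpace ℝ E] (k : E) {f : E → ℂ} {z : E}

def modulate (f : E → ℂ) (z : E) : ℂ :=
  cexp (-I * ((⟪k, z⟫ : ℝ) : ℂ)) * f z

theorem norm_modulate (f : E → ℂ) (z : E) : ‖modulate k f z‖ = ‖f z‖ := by
  simp [modulate, Complex.norm_exp]

theorem hasFDerivAt_modulate {f' : E →L[ℝ] ℂ} (hf : HasFDerivAt f f' z) :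
    HasFDerivAt (modulate k f)
      (cexp (-I * ((⟪k, z⟫ : ℝ) : ℂ)) • (f' - (I * f z) • (ofRealCLM ∘L innerSL ℝ k))) z := by
  have hphase : HasFDerivAt (fun x : E => -I * ((⟪k, x⟫ : ℝ) : ℂ))
      ((-I) • (ofRealCLM ∘L innerSL ℝ k)) z :=
    (ofRealCLM.hasFDerivAt.comp z (innerSL ℝ k).hasFDerivAt).const_mul (-I)
  refine (hphase.cexp.mul hf).congr_fderiv ?_
  ext v
  simp only [neg_mul, add_apply, smul_apply, smul_eq_mul, ContinuousLinearMap.comp_apply,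
    coe_innerSL_apply, ofRealCLM_apply, mul_neg, sub_apply]
  ring

theorem differentiable_modulate (hf : Differentiable ℝ f) : Differentiable ℝ (modulate k f) :=
  fun z => (hasFDerivAt_modulate k (hf z).hasFDerivAt).differentiableAt

theorem fderiv_modulate_apply (hf : DifferentiableAt ℝ f z) (v : E) :
    fderiv ℝ (modulate k f) z v
      = modulate k (fun x => fderiv ℝ f x v) z - I * (⟪k, v⟫ : ℝ) * modulate k f z := by
  rw [(hasFDerivAt_modulate k hf.hasFDerivAt).fderiv]
  simp only [neg_mul, smul_apply, sub_apply, ContinuousLinearMap.comp_apply, coe_innerSL_apply,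
    ofRealCLM_apply, smul_eq_mul, modulate]
  ring

theorem neg_I_mul_fderiv_modulate_apply (hf : DifferentiableAt ℝ f z) (v : E) :
    -I * fderiv ℝ (modulate k f) z v + (⟪k, v⟫ : ℝ) * modulate k f z
      = modulate k (fun x => -I * fderiv ℝ f x v) z := by
  rw [fderiv_modulate_apply k hf]
  simp only [modulate]
  linear_combination ((⟪k, v⟫ : ℝ) * cexp (-I * ((⟪k, z⟫ : ℝ) : ℂ)) * f z) * I_sq

theorem norm_fderiv_modulate_le (hf : DifferentiableAt ℝ f z) :
    ‖fderiv ℝ (modulate k f) z‖ ≤ ‖fderiv ℝ f z‖ + ‖k‖ * ‖f z‖ := by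
  refine ContinuousLinearMap.opNorm_le_bound _ (by positivity) fun v => ?_
  rw [fderiv_modulate_apply k hf]
  calc _ ≤ ‖modulate k (fun x => fderiv ℝ f x v) z‖ + ‖I * (⟪k, v⟫ : ℝ) * modulate k f z‖ :=
        norm_sub_le _ _
    _ ≤ ‖fderiv ℝ f z‖ * ‖v‖ + ‖k‖ * ‖v‖ * ‖f z‖ := by
        simp only [norm_modulate, norm_mul, norm_I, one_mul, Complex.norm_real, Real.norm_eq_abs]
        gcongr
        · exact (fderiv ℝ f z).le_opNorm v
        · exact abs_real_inner_le_norm k v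
    _ = (‖fderiv ℝ f z‖ + ‖k‖ * ‖f z‖) * ‖v‖ := by ring

variable {G : Type*} [NormedAddCommGroup G] {l : Filter E} {g : E → G}

theorem Asymptotics.IsBigO.modulate (hf : f =O[l] g) : _root_.modulate k f =O[l] g :=
  (isBigO_of_le _ fun z => (norm_modulate k f z).le).trans hf

theorem Asymptotics.IsBigO.fderiv_modulate (hfd : Differentiable ℝ f) (hf₀ : f =O[l] g)
    (hf₁ : fderiv ℝ f =O[l] g) : fderiv ℝ (_root_.modulate k f) =O[l] g :=
  (IsBigO.of_norm_le fun z => norm_fderiv_modulate_le k (hfd z)).trans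
    (hf₁.norm_left.add (hf₀.norm_left.const_mul_left ‖k‖))

end Modulation

theorem SchwartzMap.isBigO_inv_one_add_norm_pow {E F : Type*} [NormedAddCommGroup E]
    [NormedSpace ℝ E] [NormedAddCommGroup F] [NormedSpace ℝ F] (f : SchwartzMap E F) (n : ℕ) :
    f =O[⊤] fun z => ((1 + ‖z‖) ^ n)⁻¹ := by
  refine isBigO_top.2
    ⟨2 ^ n * (Finset.Iic (n, 0)).sup (fun m => SchwartzMap.seminorm ℝ m.1 m.2) f, fun z => ?_⟩
  have h := SchwartzMap.one_add_le_sup_seminorm_apply (𝕜 := ℝ) (m := (n, 0)) le_rfl le_rfl f z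
  rw [norm_iteratedFDeriv_zero] at h
  rw [Real.norm_of_nonneg (by positivity), ← div_eq_mul_inv, le_div_iff₀ (by positivity), mul_comm]
  exact h

theorem SchwartzMap.fderiv_isBigO_inv_one_add_norm_pow {E F : Type*} [NormedAddCommGroup E]
    [NormedSpace ℝ E] [NormedAddCommGroup F] [NormedSpace ℝ F] (f : SchwartzMap E F) (n : ℕ) :
    fderiv ℝ f =O[⊤] fun z => ((1 + ‖z‖) ^ n)⁻¹ :=
  (SchwartzMap.fderivCLM ℝ E F f).isBigO_inv_one_add_norm_pow n

theorem zak_eq_tsum_modulate {d : ℕ} (e : Fin d → Ed d) (Ψ : SchwartzMap (Ed d) ℂ) (k y : Ed d) :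
    zak e Ψ k y = ∑' m, modulate k Ψ (y + latVec e m) :=
  rfl

/-- The Bloch–Floquet–Zak transform intertwines momentum:
if `Φ = −i ∂_{x_j} Ψ` then `(ZΦ)(k,y) = −i ∂_{y_j}(ZΨ)(k,y) + k_j (ZΨ)(k,y)`. -/
theorem zak_momentum {d : ℕ} (b : Module.Basis (Fin d) ℝ (Ed d))
    (Ψ Φ : SchwartzMap (Ed d) ℂ) (j : Fin d)
    (hΦ : ∀ x, Φ x = -Complex.I * fderiv ℝ (⇑Ψ) x (EuclideanSpace.single j 1))
    (k y : Ed d) :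
    zak (⇑b) Φ k y
      = -Complex.I * fderiv ℝ (fun y' => zak (⇑b) Ψ k y') y (EuclideanSpace.single j 1)
        + ((k j : ℝ) : ℂ) * zak (⇑b) Ψ k y := by
  set eⱼ : Ed d := EuclideanSpace.single j 1
  set φ := modulate k Ψ
  have hγ : Summable fun m => ((1 + ‖latVec b m‖) ^ (d + 1))⁻¹ :=
    b.summable_inv_one_add_norm_intSum_pow (by simp)
  have hΨ₀ := Ψ.isBigO_inv_one_add_norm_pow (d + 1)
  have hφ₀ := hΨ₀.modulate k
  have hφ₁ := hΨ₀.fderiv_modulate k Ψ.differentiable (Ψ.fderiv_isBigO_inv_one_add_norm_pow _)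
  have hk : ⟪k, eⱼ⟫ = k j := by simp [eⱼ, EuclideanSpace.inner_single_right]
  calc zak b Φ k y = ∑' m, modulate k (fun x => -I * fderiv ℝ Ψ x eⱼ) (y + latVec b m) := by
        rw [zak_eq_tsum_modulate, show ⇑Φ = _ from funext hΦ]
    _ = ∑' m, (-I * fderiv ℝ φ (y + latVec b m) eⱼ + (k j : ℂ) * φ (y + latVec b m)) := by
        refine tsum_congr fun m => ?_
        rw [← neg_I_mul_fderiv_modulate_apply k Ψ.differentiableAt, hk]
    _ = -I * ∑' m, fderiv ℝ φ (y + latVec b m) eⱼ + (k j : ℂ) * ∑' m, φ (y + latVec b m) := by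
        have hsumⱼ := (summable_comp_add_of_isBigO hφ₁ hγ y).mapL (.apply ℝ ℂ eⱼ)
        rw [← tsum_mul_left, ← tsum_mul_left]
        exact (hsumⱼ.mul_left (-I)).tsum_add ((summable_comp_add_of_isBigO hφ₀ hγ y).mul_left _)
    _ = _ := by
        rw [← fderiv_tsum_comp_add_apply (differentiable_modulate k Ψ.differentiable) hφ₀ hφ₁ hγ]
        rfl
end
end

section
/- For every Schwartz function Ψ ∈ S(ℝ^d), every j ∈ {1,…,d} and all k, y ∈ ℝ^d, the Bloch–Floquet–Zak transform intertwines the position operator with i∂_k: (Z(x_j Ψ))(k,y) = i ∂_{k_j} (ZΨ)(k,y), where x_j Ψ denotes the function x ↦ x_j Ψ(x). -/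
open scoped BigOperators RealInnerProductSpace

noncomputable section

/-! Termwise, `∂_{k_j}` of the plane wave `e^{-ik·x}` is `-i x_j e^{-ik·x}`, so `i ∂_{k_j}` of the
Zak sum is the Zak sum of `x_j Ψ`. Differentiation under the sum is legitimate because a Schwartz
function, even multiplied by `‖x‖`, is `O(‖x‖^{-r})` for every `r`, and `∑_{γ ∈ Γ} ‖y + γ‖^{-r}`
converges once `r` exceeds the rank of the lattice. -/

open Complex
open scoped SchwartzMap

namespace ZLattice

variable {E F : Type*} [NormedAddCommGroup E] [NormedSpace ℝ E] [FiniteDimensional ℝ E]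
  [NormedAddCommGroup F] [NormedSpace ℝ F]

lemma summable_norm_pow_mul_norm_schwartzMap (L : Submodule ℤ E) [DiscreteTopology L]
    (f : 𝓢(E, F)) (n : ℕ) (y : E) :
    Summable fun z : L => ‖y + z‖ ^ n * ‖f (y + z)‖ := by
  set k := Module.finrank ℤ L + 1
  obtain ⟨C, -, hC⟩ := f.decay (n + k) 0
  refine Summable.of_norm_bounded_eventually
    ((summable_norm_sub_inv_pow L k (Nat.lt_succ_self _) (-y)).mul_left C) ?_
  have hfin : {z : L | y + (z : E) = 0}.Finite :=
    Set.Subsingleton.finite fun z₁ h₁ z₂ h₂ => Subtype.ext (add_left_cancel (h₁.trans h₂.symm))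
  refine hfin.eventually_cofinite_notMem.mono fun z hz => ?_
  have hpos : 0 < ‖y + (z : E)‖ := norm_pos_iff.mpr hz
  specialize hC (y + z)
  rw [norm_iteratedFDeriv_zero] at hC
  rw [sub_neg_eq_add, add_comm (z : E), Real.norm_of_nonneg (by positivity), inv_pow,
    ← div_eq_mul_inv, le_div_iff₀ (by positivity)]
  calc ‖y + z‖ ^ n * ‖f (y + z)‖ * ‖y + z‖ ^ k = ‖y + z‖ ^ (n + k) * ‖f (y + z)‖ := by ring
    _ ≤ C := hC

end ZLattice

lemma latVec_eq_coe_equivFun_symm {d : ℕ} (b : Module.Basis (Fin d) ℝ (Ed d)) (m : Fin d → ℤ) :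
    latVec (⇑b) m = (b.restrictScalars ℤ).equivFun.symm m := by
  simp [latVec, Module.Basis.equivFun_symm_apply, Module.Basis.restrictScalars_apply,
    Int.cast_smul_eq_zsmul]

lemma summable_norm_pow_mul_norm_schwartzMap_latVec {d : ℕ} (b : Module.Basis (Fin d) ℝ (Ed d))
    (f : 𝓢(Ed d, ℂ)) (n : ℕ) (y : Ed d) :
    Summable fun m => ‖y + latVec (⇑b) m‖ ^ n * ‖f (y + latVec (⇑b) m)‖ := by
  have h := ZLattice.summable_norm_pow_mul_norm_schwartzMap (Submodule.span ℤ (Set.range b)) f n y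
  rw [← (b.restrictScalars ℤ).equivFun.symm.toEquiv.summable_iff] at h
  simpa only [Function.comp_def, LinearEquiv.coe_toEquiv, ← latVec_eq_coe_equivFun_symm] using h

section PlaneWave

variable {E : Type*} [NormedAddCommGroup E] [InnerProductSpace ℝ E]

lemma hasFDerivAt_cexp_neg_I_mul_inner (x k : E) :
    HasFDerivAt (fun k' : E => cexp (-I * (⟪k', x⟫ : ℝ)))
      ((-I * cexp (-I * (⟪k, x⟫ : ℝ))) • (ofRealCLM ∘L innerSL ℝ x)) k := by
  have hinner : HasFDerivAt (fun k' : E => ((⟪k', x⟫ : ℝ) : ℂ)) (ofRealCLM ∘L innerSL ℝ x) k :=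
    (ofRealCLM ∘L innerSL ℝ x).hasFDerivAt.congr_of_eventuallyEq
      (.of_forall fun k' => by simp [real_inner_comm])
  simpa [smul_smul, mul_comm] using (hinner.const_mul (-I)).cexp

lemma norm_cexp_neg_I_mul_ofReal (r : ℝ) : ‖cexp (-I * r)‖ = 1 := by
  rw [norm_exp]; simp

lemma norm_ofRealCLM_comp_innerSL_le (x : E) : ‖ofRealCLM ∘L innerSL ℝ x‖ ≤ ‖x‖ :=
  (ContinuousLinearMap.opNorm_comp_le _ _).trans (by simp)

lemma norm_smul_ofRealCLM_comp_innerSL_le (c : ℂ) (x k : E) :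
    ‖(c * (-I * cexp (-I * (⟪k, x⟫ : ℝ)))) • (ofRealCLM ∘L innerSL ℝ x)‖ ≤ ‖x‖ * ‖c‖ := by
  rw [norm_smul, norm_mul, norm_mul, norm_neg, norm_I, norm_cexp_neg_I_mul_ofReal, one_mul,
    mul_one, mul_comm]
  gcongr
  exact norm_ofRealCLM_comp_innerSL_le x

variable {ι : Type*} {x : ι → E} {c : ι → ℂ}

lemma hasFDerivAt_tsum_cexp_neg_I_mul_inner (hc : Summable fun i => ‖c i‖)
    (hxc : Summable fun i => ‖x i‖ * ‖c i‖) (k : E) :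
    HasFDerivAt (fun k' => ∑' i, cexp (-I * (⟪k', x i⟫ : ℝ)) * c i)
      (∑' i, (c i * (-I * cexp (-I * (⟪k, x i⟫ : ℝ)))) • (ofRealCLM ∘L innerSL ℝ (x i))) k := by
  refine hasFDerivAt_tsum (x₀ := k)
    (f' := fun i k' => (c i * (-I * cexp (-I * (⟪k', x i⟫ : ℝ)))) • (ofRealCLM ∘L innerSL ℝ (x i)))
    hxc (fun i k' => ?_) (fun i k' => norm_smul_ofRealCLM_comp_innerSL_le _ _ _)
    (hc.of_norm_bounded fun i => ?_) k
  · simpa [mul_comm, smul_smul] using (hasFDerivAt_cexp_neg_I_mul_inner (x i) k').const_mul (c i)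
  · rw [norm_mul, norm_cexp_neg_I_mul_ofReal, one_mul]

lemma I_mul_fderiv_tsum_cexp_neg_I_mul_inner_apply (hc : Summable fun i => ‖c i‖)
    (hxc : Summable fun i => ‖x i‖ * ‖c i‖) (k v : E) :
    I * fderiv ℝ (fun k' => ∑' i, cexp (-I * (⟪k', x i⟫ : ℝ)) * c i) k v
      = ∑' i, cexp (-I * (⟪k, x i⟫ : ℝ)) * ((⟪x i, v⟫ : ℝ) * c i) := by
  have hsum := hxc.of_norm_bounded fun i => norm_smul_ofRealCLM_comp_innerSL_le (c i) (x i) k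
  have happly := (hsum.hasSum.mapL (ContinuousLinearMap.apply ℝ ℂ v)).tsum_eq
  simp only [ContinuousLinearMap.apply_apply] at happly
  rw [(hasFDerivAt_tsum_cexp_neg_I_mul_inner hc hxc k).fderiv, ← happly, ← tsum_mul_left]
  refine tsum_congr fun i => ?_
  simp only [FunLike.coe_smul, Pi.smul_apply, ContinuousLinearMap.comp_apply,
    innerSL_apply_apply, ofRealCLM_apply, smul_eq_mul]
  linear_combination (-(cexp (-I * (⟪k, x i⟫ : ℝ)) * (⟪x i, v⟫ : ℝ) * c i)) * I_mul_I

end PlaneWave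

/-- The Bloch–Floquet–Zak transform intertwines the position operator with `i∂_k`:
if `Φ(x) = x_j Ψ(x)` then `(ZΦ)(k,y) = i ∂_{k_j}(ZΨ)(k,y)`. -/
theorem zak_position {d : ℕ} (b : Module.Basis (Fin d) ℝ (Ed d))
    (Ψ Φ : SchwartzMap (Ed d) ℂ) (j : Fin d)
    (hΦ : ∀ x : Ed d, Φ x = ((x j : ℝ) : ℂ) * Ψ x)
    (k y : Ed d) :
    zak (⇑b) Φ k y
      = Complex.I * fderiv ℝ (fun k' => zak (⇑b) Ψ k' y) k (EuclideanSpace.single j 1) := by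
  have hΨ := summable_norm_pow_mul_norm_schwartzMap_latVec b Ψ 0 y
  have hxΨ := summable_norm_pow_mul_norm_schwartzMap_latVec b Ψ 1 y
  simp only [pow_zero, one_mul, pow_one] at hΨ hxΨ
  unfold zak
  rw [I_mul_fderiv_tsum_cexp_neg_I_mul_inner_apply hΨ hxΨ]
  simp [hΦ, EuclideanSpace.inner_single_right]
end
end
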